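/- arXiv:1404.0723 — 3 statements merged into one kernel-verified Lean document; each statement's English description precedes it below -/
import Mathlib

section
/- Let V be a finite type and w : V → V → ℝ a symmetric function (w p q = w q p for all p, q) with nonnegative values (w p q ≥ 0 for all p, q). Let W be the V × V real matrix with entries W p q = w p q, let D be the diagonal matrix with diagonal entries D p p = Σ_{q ∈ V} w p q, and let L = D − W be the graph Laplacian. Let G be the support graph of w, i.e., the simple graph on V in which p and q are adjacent iff p ≠ q and w p q ≠ 0. Then the kernel of the linear map x ↦ L.mulVec x (the eigenspace of L for the eigenvalue 0) equals the linear span of the indicator vectors 1_A of the connected components A of G. -/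
/-!
For symmetric weights, `2 xᵀ L x = ∑ p q, w p q (x p - x q) ^ 2`. With nonnegative weights this
vanishes exactly when `x` is constant across every edge of positive weight, so `L` has the same
kernel as the unweighted Laplacian of the support graph, and that kernel is spanned by the
indicators of connected components.
-/

open Finset Matrix

namespace Matrix

variable {V R : Type*} [Fintype V] [DecidableEq V]

def laplacian [Ring R] (A : Matrix V V R) : Matrix V V R :=
  diagonal (fun i => ∑ j, A i j) - A

theorem laplacian_mulVec_apply [Ring R] (A : Matrix V V R) (x : V → R) (i : V) :
    (A.laplacian *ᵥ x) i = ∑ j, A i j * (x i - x j) := by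
  rw [laplacian, sub_mulVec, Pi.sub_apply, mulVec_diagonal, sum_mul, mulVec, dotProduct,
    ← sum_sub_distrib]
  simp_rw [mul_sub]

theorem two_mul_dotProduct_laplacian_mulVec [CommRing R] {A : Matrix V V R} (hA : A.IsSymm)
    (x : V → R) :
    2 * (x ⬝ᵥ A.laplacian *ᵥ x) = ∑ i, ∑ j, A i j * (x i - x j) ^ 2 := by
  have hswap : ∑ i, ∑ j, A i j * (x i - x j) * x i = -∑ i, ∑ j, A i j * (x i - x j) * x j := by
    rw [sum_comm, ← sum_neg_distrib]
    refine sum_congr rfl fun j _ => ?_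
    rw [← sum_neg_distrib]
    refine sum_congr rfl fun i _ => ?_
    rw [hA.apply i j]
    ring
  calc 2 * (x ⬝ᵥ A.laplacian *ᵥ x)
      = 2 * ∑ i, ∑ j, A i j * (x i - x j) * x i := by
        simp only [dotProduct, laplacian_mulVec_apply, sum_mul, mul_comm (x _)]
    _ = ∑ i, ∑ j, A i j * (x i - x j) * x i - ∑ i, ∑ j, A i j * (x i - x j) * x j := by
        rw [hswap]; ring
    _ = ∑ i, ∑ j, A i j * (x i - x j) ^ 2 := by
        simp only [← sum_sub_distrib]
        exact sum_congr rfl fun i _ => sum_congr rfl fun j _ => by ring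

theorem laplacian_mulVec_eq_zero_iff [CommRing R] [LinearOrder R] [IsStrictOrderedRing R]
    {A : Matrix V V R} (hA : A.IsSymm) (hA₀ : ∀ i j, 0 ≤ A i j) (x : V → R) :
    A.laplacian *ᵥ x = 0 ↔ ∀ i j, A i j ≠ 0 → x i = x j := by
  constructor
  · intro hx i j hij
    have hsum : ∑ i, ∑ j, A i j * (x i - x j) ^ 2 = 0 := by
      rw [← two_mul_dotProduct_laplacian_mulVec hA, hx, dotProduct_zero, mul_zero]
    have hterm : A i j * (x i - x j) ^ 2 = 0 := by
      simp_rw [sum_eq_zero_iff_of_nonneg (fun _ _ =>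
        sum_nonneg fun _ _ => mul_nonneg (hA₀ _ _) (sq_nonneg _)),
        sum_eq_zero_iff_of_nonneg (fun _ _ => mul_nonneg (hA₀ _ _) (sq_nonneg _))] at hsum
      exact hsum i (mem_univ _) j (mem_univ _)
    simpa [hij, sub_eq_zero] using hterm
  · intro h
    ext i
    rw [laplacian_mulVec_apply, Pi.zero_apply]
    refine sum_eq_zero fun j _ => ?_
    by_cases hij : A i j = 0
    · rw [hij, zero_mul]
    · rw [h i j hij, sub_self, mul_zero]

end Matrix

namespace SimpleGraph

theorem ker_toLin'_lapMatrix_eq_span {V : Type*} [Fintype V] [DecidableEq V] (G : SimpleGraph V)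
    [DecidableRel G.Adj] [DecidableEq G.ConnectedComponent] :
    LinearMap.ker (toLin' (G.lapMatrix ℝ)) =
      Submodule.span ℝ (Set.range fun c : G.ConnectedComponent =>
        fun i => if G.connectedComponentMk i = c then (1 : ℝ) else 0) := by
  have hrange : (Set.range fun c : G.ConnectedComponent =>
      fun i => if G.connectedComponentMk i = c then (1 : ℝ) else 0) =
      (LinearMap.ker (toLin' (G.lapMatrix ℝ))).subtype '' Set.range (lapMatrix_ker_basis_aux G) := by
    rw [← Set.range_comp]; rfl
  rw [hrange, Submodule.span_image, eq_top_iff.mpr G.top_le_span_range_lapMatrix_ker_basis_aux,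
    Submodule.map_subtype_top]

end SimpleGraph

open Finset Matrix Classical in
theorem laplacian_kernel_eq_span_indicators
    {V : Type*} [Fintype V] [DecidableEq V]
    (w : V → V → ℝ) (hsymm : ∀ p q, w p q = w q p)
    (hnonneg : ∀ p q, 0 ≤ w p q)
    (W : Matrix V V ℝ) (hW : ∀ p q, W p q = w p q)
    (D : Matrix V V ℝ) (hD : D = Matrix.diagonal fun p => ∑ q, w p q)
    (L : Matrix V V ℝ) (hL : L = D - W)
    (G : SimpleGraph V) (hG : ∀ p q, G.Adj p q ↔ p ≠ q ∧ w p q ≠ 0) :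
    LinearMap.ker L.mulVecLin =
      Submodule.span ℝ
        (Set.range fun A : G.ConnectedComponent =>
          fun p => if G.connectedComponentMk p = A then (1 : ℝ) else 0) := by
  have hWsymm : W.IsSymm := Matrix.IsSymm.ext fun p q => by rw [hW, hW, hsymm]
  have hL' : L = W.laplacian := by
    ext p q
    simp [hL, hD, hW, laplacian]
  ext x
  rw [← G.ker_toLin'_lapMatrix_eq_span, LinearMap.mem_ker, LinearMap.mem_ker, mulVecLin_apply,
    toLin'_apply, hL', laplacian_mulVec_eq_zero_iff hWsymm (fun p q => hW p q ▸ hnonneg p q),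
    G.lapMatrix_mulVec_eq_zero_iff_forall_adj]
  simp only [hW, hG]
  -- the support graph has no loops, but the condition `x p = x p` is trivial there anyway
  exact forall₂_congr fun p q => ⟨fun h hpq => h hpq.2,
    fun h hw => (eq_or_ne p q).elim (congrArg x) fun hne => h ⟨hne, hw⟩⟩
end

section
/- Let V be a finite type and w : V → V → ℝ a symmetric function (w p q = w q p for all p, q) with nonnegative values (w p q ≥ 0 for all p, q). Let W be the V × V real matrix with entries W p q = w p q, let D be the diagonal matrix with diagonal entries D p p = Σ_{q ∈ V} w p q, and let L = D − W be the graph Laplacian. Let G be the support graph of w, i.e., the simple graph on V in which p and q are adjacent iff p ≠ q and w p q ≠ 0. Then the dimension of the kernel of the linear map x ↦ L.mulVec x (i.e., the multiplicity of the eigenvalue 0 of L) equals the number of connected components of G. -/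
open Finset Matrix

theorem laplacian_kernel_dim_eq_card_components
    {V : Type*} [Fintype V] [DecidableEq V]
    (w : V → V → ℝ) (hsymm : ∀ p q, w p q = w q p)
    (hnonneg : ∀ p q, 0 ≤ w p q)
    (W : Matrix V V ℝ) (hW : ∀ p q, W p q = w p q)
    (D : Matrix V V ℝ) (hD : D = Matrix.diagonal fun p => ∑ q, w p q)
    (L : Matrix V V ℝ) (hL : L = D - W)
    (G : SimpleGraph V) (hG : ∀ p q, G.Adj p q ↔ p ≠ q ∧ w p q ≠ 0) :
    Module.finrank ℝ (LinearMap.ker L.mulVecLin) = Nat.card G.ConnectedComponent := by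
  classical
  subst hL hD
  -- entrywise formula for L.mulVec
  have hentryL : ∀ (x : V → ℝ) (p : V),
      ((Matrix.diagonal (fun p => ∑ q, w p q) - W).mulVec x) p
        = ∑ q, w p q * (x p - x q) := by
    intro x p
    rw [Matrix.sub_mulVec]
    simp only [Pi.sub_apply, Matrix.mulVec_diagonal]
    simp only [Matrix.mulVec, dotProduct, hW, mul_sub]
    rw [Finset.sum_sub_distrib, Finset.sum_mul]
  -- kernel characterization
  have hker : ∀ x : V → ℝ,
      (Matrix.diagonal (fun p => ∑ q, w p q) - W).mulVec x = 0 ↔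
      ∀ p q : V, G.Reachable p q → x p = x q := by
    intro x
    constructor
    · intro hx
      have hentry : ∀ p, ∑ q, w p q * (x p - x q) = 0 := by
        intro p
        rw [← hentryL x p, hx]
        rfl
      -- double sum of w p q * (x p - x q)^2 is zero
      have hS : ∑ p, ∑ q, w p q * (x p - x q) ^ 2 = 0 := by
        have hA : ∀ p, ∑ q, w p q * (x p - x q) * x p = 0 := by
          intro p
          rw [← Finset.sum_mul, hentry p, zero_mul]
        have hB : ∀ q, ∑ p, w p q * (x p - x q) * x q = 0 := by
          intro q
          rw [← Finset.sum_mul]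
          have : ∑ p, w p q * (x p - x q) = -∑ p, w q p * (x q - x p) := by
            rw [← Finset.sum_neg_distrib]
            refine Finset.sum_congr rfl fun p _ => ?_
            rw [hsymm p q]; ring
          rw [this, hentry q, neg_zero, zero_mul]
        have key : ∑ p, ∑ q, w p q * (x p - x q) ^ 2
            = (∑ p, ∑ q, w p q * (x p - x q) * x p)
              - ∑ p, ∑ q, w p q * (x p - x q) * x q := by
          rw [← Finset.sum_sub_distrib]
          refine Finset.sum_congr rfl fun p _ => ?_
          rw [← Finset.sum_sub_distrib]
          refine Finset.sum_congr rfl fun q _ => ?_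
          ring
        rw [key, Finset.sum_comm (f := fun p q => w p q * (x p - x q) * x q)]
        simp [hA, hB]
      -- each term is zero
      have hterm : ∀ p q, w p q * (x p - x q) ^ 2 = 0 := by
        have h1 := (Finset.sum_eq_zero_iff_of_nonneg (fun p _ =>
          Finset.sum_nonneg fun q _ =>
            mul_nonneg (hnonneg p q) (sq_nonneg _))).mp hS
        intro p q
        have h2 := (Finset.sum_eq_zero_iff_of_nonneg (fun q _ =>
          mul_nonneg (hnonneg p q) (sq_nonneg _))).mp (h1 p (Finset.mem_univ p))
        exact h2 q (Finset.mem_univ q)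
      have hadj : ∀ p q, G.Adj p q → x p = x q := by
        intro p q hpq
        obtain ⟨-, hw⟩ := (hG p q).mp hpq
        have := hterm p q
        have hsq : (x p - x q) ^ 2 = 0 := by
          rcases mul_eq_zero.mp this with h | h
          · exact absurd h hw
          · exact h
        have := pow_eq_zero_iff (n := 2) (by norm_num) |>.mp hsq
        linarith [sub_eq_zero.mp this]
      intro p q hpq
      obtain ⟨walk⟩ := hpq
      induction walk with
      | nil => rfl
      | cons h _ ih => exact (hadj _ _ h).trans ih
    · intro hx
      funext p
      rw [Pi.zero_apply, hentryL x p]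
      refine Finset.sum_eq_zero fun q _ => ?_
      by_cases hw : w p q = 0
      · rw [hw, zero_mul]
      · by_cases hpq : p = q
        · subst hpq; simp
        · have hadj : G.Adj p q := (hG p q).mpr ⟨hpq, hw⟩
          rw [hx p q hadj.reachable, sub_self, mul_zero]
  haveI : Fintype G.ConnectedComponent := Fintype.ofFinite _
  let ψ : (G.ConnectedComponent → ℝ) →ₗ[ℝ] (V → ℝ) :=
    { toFun := fun f p => f (G.connectedComponentMk p)
      map_add' := fun f g => rfl
      map_smul' := fun c f => rfl }
  have hinj : Function.Injective ψ := by
    intro f g h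
    funext c
    induction c using SimpleGraph.ConnectedComponent.ind with
    | _ p => exact congrFun h p
  have hrange : LinearMap.range ψ
      = LinearMap.ker (Matrix.diagonal (fun p => ∑ q, w p q) - W).mulVecLin := by
    ext x
    simp only [LinearMap.mem_range, LinearMap.mem_ker, Matrix.mulVecLin_apply]
    constructor
    · rintro ⟨f, rfl⟩
      rw [hker]
      intro p q hpq
      show f (G.connectedComponentMk p) = f (G.connectedComponentMk q)
      rw [SimpleGraph.ConnectedComponent.eq.mpr hpq]
    · intro hx
      have hc := (hker x).mp hx
      refine ⟨SimpleGraph.ConnectedComponent.lift x (fun v u p _ => hc v u ⟨p⟩), ?_⟩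
      funext p
      rfl
  rw [← hrange, LinearMap.finrank_range_of_inj hinj,
    Module.finrank_fintype_fun_eq_card, Nat.card_eq_fintype_card]
end

section
/- Let V be a finite type and w : V → V → ℝ a symmetric function (w p q = w q p for all p, q). Let W be the V × V real matrix with entries W p q = w p q, let D be the diagonal matrix with diagonal entries d p = Σ_{q ∈ V} w p q, and let L = D − W be the graph Laplacian. Let A, B be disjoint nonempty finite subsets of V with A ∪ B = V, set cut(A,B) = Σ_{p ∈ A} Σ_{q ∈ B} w p q, vol(A) = Σ_{p ∈ A} d p and vol(B) = Σ_{p ∈ B} d p, and assume vol(A) > 0 and vol(B) > 0. Define f : V → ℝ by f p = 1/vol(A) for p ∈ A and f p = −1/vol(B) for p ∈ B. Then: (i) fᵀ D f = 1/vol(A) + 1/vol(B); (ii) fᵀ L f = cut(A,B) · (1/vol(A) + 1/vol(B))²; consequently the generalized Rayleigh quotient (fᵀ L f)/(fᵀ D f) equals cut(A,B)/vol(A) + cut(A,B)/vol(B), which is the normalized cut Ncut(A,B). -/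
open Finset Matrix Classical in
theorem normalized_cut_rayleigh_quotient
    {V : Type*} [Fintype V] [DecidableEq V]
    (w : V → V → ℝ) (hsymm : ∀ p q, w p q = w q p)
    (d : V → ℝ) (hd : d = fun p => ∑ q, w p q)
    (W : Matrix V V ℝ) (hW : ∀ p q, W p q = w p q)
    (D : Matrix V V ℝ) (hD : D = Matrix.diagonal d)
    (L : Matrix V V ℝ) (hL : L = D - W)
    (A B : Finset V) (hAB : Disjoint A B) (hA : A.Nonempty) (hB : B.Nonempty)
    (hcover : A ∪ B = Finset.univ)
    (cut : ℝ) (hcut : cut = ∑ p ∈ A, ∑ q ∈ B, w p q)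
    (volA volB : ℝ) (hvolA : volA = ∑ p ∈ A, d p) (hvolB : volB = ∑ p ∈ B, d p)
    (hvolApos : 0 < volA) (hvolBpos : 0 < volB)
    (f : V → ℝ)
    (hf : f = fun p => if p ∈ A then 1 / volA else -1 / volB) :
    (f ⬝ᵥ D.mulVec f = 1 / volA + 1 / volB) ∧
    (f ⬝ᵥ L.mulVec f = cut * (1 / volA + 1 / volB) ^ 2) ∧
    (f ⬝ᵥ L.mulVec f) / (f ⬝ᵥ D.mulVec f) = cut / volA + cut / volB := by
  have hAne : volA ≠ 0 := ne_of_gt hvolApos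
  have hBne : volB ≠ 0 := ne_of_gt hvolBpos
  have hfA : ∀ p ∈ A, f p = 1 / volA := fun p hp => by simp [hf, hp]
  have hfB : ∀ p ∈ B, f p = -1 / volB := fun p hp => by
    have hpA : p ∉ A := fun h => Finset.disjoint_left.mp hAB h hp
    simp [hf, hpA]
  have hsplit : ∀ g : V → ℝ, ∑ p, g p = (∑ p ∈ A, g p) + ∑ p ∈ B, g p := by
    intro g; rw [← Finset.sum_union hAB, hcover]
  -- volume splits
  have hvolA' : volA = (∑ p ∈ A, ∑ q ∈ A, w p q) + ∑ p ∈ A, ∑ q ∈ B, w p q := by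
    rw [hvolA, hd, ← Finset.sum_add_distrib]
    exact Finset.sum_congr rfl fun p _ => hsplit _
  have hvolB' : volB = (∑ p ∈ B, ∑ q ∈ A, w p q) + ∑ p ∈ B, ∑ q ∈ B, w p q := by
    rw [hvolB, hd, ← Finset.sum_add_distrib]
    exact Finset.sum_congr rfl fun p _ => hsplit _
  have hcutBA : ∑ p ∈ B, ∑ q ∈ A, w p q = cut := by
    rw [hcut, Finset.sum_comm]
    exact Finset.sum_congr rfl fun p _ => Finset.sum_congr rfl fun q _ => hsymm q p
  -- D part
  have hDf : f ⬝ᵥ D.mulVec f = 1 / volA + 1 / volB := by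
    rw [hD]
    simp only [dotProduct, Matrix.mulVec_diagonal]
    rw [hsplit fun p => f p * (d p * f p)]
    have h1 : ∑ p ∈ A, f p * (d p * f p) = (1 / volA) ^ 2 * ∑ p ∈ A, d p := by
      rw [Finset.mul_sum]
      exact Finset.sum_congr rfl fun p hp => by rw [hfA p hp]; ring
    have h2 : ∑ p ∈ B, f p * (d p * f p) = (1 / volB) ^ 2 * ∑ p ∈ B, d p := by
      rw [Finset.mul_sum]
      exact Finset.sum_congr rfl fun p hp => by rw [hfB p hp]; ring
    rw [h1, h2, ← hvolA, ← hvolB]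
    field_simp
  -- W part
  have inner : ∀ p, ∑ q, w p q * f q
      = (∑ q ∈ A, w p q) * (1 / volA) + (∑ q ∈ B, w p q) * (-1 / volB) := by
    intro p
    rw [hsplit fun q => w p q * f q]
    congr 1
    · rw [Finset.sum_mul]; exact Finset.sum_congr rfl fun q hq => by rw [hfA q hq]
    · rw [Finset.sum_mul]; exact Finset.sum_congr rfl fun q hq => by rw [hfB q hq]
  have hWf : f ⬝ᵥ W.mulVec f
      = (1 / volA) * ((∑ p ∈ A, ∑ q ∈ A, w p q) * (1 / volA) + cut * (-1 / volB))
        + (-1 / volB) * (cut * (1 / volA) + (∑ p ∈ B, ∑ q ∈ B, w p q) * (-1 / volB)) := by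
    simp only [dotProduct, Matrix.mulVec, dotProduct, hW]
    rw [hsplit fun p => f p * ∑ q, w p q * f q]
    have hAterm : ∑ p ∈ A, f p * (∑ q, w p q * f q)
        = (1 / volA) * ((∑ p ∈ A, ∑ q ∈ A, w p q) * (1 / volA)
            + (∑ p ∈ A, ∑ q ∈ B, w p q) * (-1 / volB)) := by
      rw [Finset.sum_mul, Finset.sum_mul, ← Finset.sum_add_distrib, Finset.mul_sum]
      exact Finset.sum_congr rfl fun p hp => by rw [hfA p hp, inner p]
    have hBterm : ∑ p ∈ B, f p * (∑ q, w p q * f q)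
        = (-1 / volB) * ((∑ p ∈ B, ∑ q ∈ A, w p q) * (1 / volA)
            + (∑ p ∈ B, ∑ q ∈ B, w p q) * (-1 / volB)) := by
      rw [Finset.sum_mul, Finset.sum_mul, ← Finset.sum_add_distrib, Finset.mul_sum]
      exact Finset.sum_congr rfl fun p hp => by rw [hfB p hp, inner p]
    rw [hAterm, hBterm, ← hcut, hcutBA]
  have hSAA : (∑ p ∈ A, ∑ q ∈ A, w p q) = volA - cut := by
    rw [hvolA', hcut]; ring
  have hSBB : (∑ p ∈ B, ∑ q ∈ B, w p q) = volB - cut := by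
    rw [hvolB', hcutBA]; ring
  have hLf : f ⬝ᵥ L.mulVec f = cut * (1 / volA + 1 / volB) ^ 2 := by
    rw [hL, Matrix.sub_mulVec, dotProduct_sub, hDf, hWf, hSAA, hSBB]
    field_simp
    ring
  refine ⟨hDf, hLf, ?_⟩
  rw [hDf, hLf]
  have hs : 1 / volA + 1 / volB ≠ 0 := by positivity
  field_simp
end
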